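/- arXiv:2605.21647 — 2 statements merged into one kernel-verified Lean document; each statement's English description precedes it below -/
import Mathlib

section
/- Let α, γ be real numbers with α > 0 and γ > 0, let κ ≥ 0 and β ≥ 0 satisfy β(α+γ) < 4, and define Δ(p) = α − κ − p(α+γ) and f(p) = 1/(1 + exp(β·Δ(p))). Then f has exactly one fixed point in [0,1]: if p, q ∈ [0,1] satisfy f(p) = p and f(q) = q, then p = q, and such a fixed point exists. -/
/-!
Since `β Δ(p) = -(s p + c)` with `s = β(α+γ)` and `c = -β(α-κ)`, the map is `f p = σ(s p + c)`
for the logistic sigmoid `σ`. Existence is the intermediate value theorem, as `σ` maps into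
`[0,1]`. For uniqueness, `σ' = σ(1-σ) ∈ (0, 1/4]`, so `f' = s σ(1-σ) < 1` whenever `s < 4`
(trivially so when `s ≤ 0`); hence `p ↦ f p - p` is strictly decreasing and vanishes at most once.
-/

open Function Set

namespace Real

lemma sigmoid_mul_one_sub_sigmoid_pos (x : ℝ) : 0 < sigmoid x * (1 - sigmoid x) :=
  mul_pos (sigmoid_pos x) (sub_pos.2 (sigmoid_lt_one x))

lemma sigmoid_mul_one_sub_sigmoid_le (x : ℝ) : sigmoid x * (1 - sigmoid x) ≤ 1 / 4 := by
  nlinarith [sq_nonneg (2 * sigmoid x - 1)]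

lemma mul_sigmoid_mul_one_sub_sigmoid_lt_one {s : ℝ} (hs : s < 4) (x : ℝ) :
    s * (sigmoid x * (1 - sigmoid x)) < 1 := by
  rcases le_or_gt s 0 with hs₀ | hs₀
  · nlinarith [sigmoid_mul_one_sub_sigmoid_pos x]
  · nlinarith [sigmoid_mul_one_sub_sigmoid_le x]

lemma hasDerivAt_sigmoid_affine (s c x : ℝ) :
    HasDerivAt (fun p => sigmoid (s * p + c))
      (s * (sigmoid (s * x + c) * (1 - sigmoid (s * x + c)))) x := by
  have h : HasDerivAt (fun p => s * p + c) s x := by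
    simpa using ((hasDerivAt_id x).const_mul s).add_const c
  exact ((hasDerivAt_sigmoid _).comp x h).congr_deriv (mul_comm _ _)

lemma strictAnti_sigmoid_affine_sub_id {s : ℝ} (hs : s < 4) (c : ℝ) :
    StrictAnti fun p => sigmoid (s * p + c) - p :=
  strictAnti_of_hasDerivAt_neg (fun x => (hasDerivAt_sigmoid_affine s c x).sub (hasDerivAt_id x))
    fun _ => sub_neg.2 (mul_sigmoid_mul_one_sub_sigmoid_lt_one hs _)

lemma eq_of_isFixedPt_sigmoid_affine {s c p q : ℝ} (hs : s < 4)
    (hp : IsFixedPt (fun p => sigmoid (s * p + c)) p)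
    (hq : IsFixedPt (fun p => sigmoid (s * p + c)) q) : p = q :=
  (strictAnti_sigmoid_affine_sub_id hs c).injective <| by
    simp only [hp.eq, hq.eq, sub_self]

lemma exists_mem_Icc_isFixedPt_sigmoid_affine (s c : ℝ) :
    ∃ p ∈ Icc (0 : ℝ) 1, IsFixedPt (fun p => sigmoid (s * p + c)) p :=
  exists_mem_Icc_isFixedPt (continuous_sigmoid.comp (by fun_prop)).continuousOn zero_le_one
    (sigmoid_nonneg _) (sigmoid_le_one _)

end Real

theorem qre_sb_unique_general
    (α γ κ β : ℝ)
    (hcontr : β * (α + γ) < 4)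
    (Δ f : ℝ → ℝ)
    (hΔ : ∀ p, Δ p = α - κ - p * (α + γ))
    (hf : ∀ p, f p = 1 / (1 + Real.exp (β * Δ p))) :
    (∀ p ∈ Set.Icc (0:ℝ) 1, ∀ q ∈ Set.Icc (0:ℝ) 1,
        f p = p → f q = q → p = q) ∧
      ∃ p ∈ Set.Icc (0:ℝ) 1, f p = p := by
  obtain rfl : f = fun p => Real.sigmoid (β * (α + γ) * p + -(β * (α - κ))) := by
    funext p
    rw [hf, hΔ, Real.sigmoid_def, one_div]
    ring_nf
  exact ⟨fun p _ q _ hp hq => Real.eq_of_isFixedPt_sigmoid_affine hcontr hp hq,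
    Real.exists_mem_Icc_isFixedPt_sigmoid_affine _ _⟩

/-- Under the contraction condition `β(α+γ) < 4`, the logit response map has
exactly one fixed point in `[0,1]`. -/
theorem qre_sb_unique
    (α γ κ β : ℝ) (hα : 0 < α) (hγ : 0 < γ) (hκ : 0 ≤ κ) (hβ : 0 ≤ β)
    (hcontr : β * (α + γ) < 4)
    (Δ f : ℝ → ℝ)
    (hΔ : ∀ p, Δ p = α - κ - p * (α + γ))
    (hf : ∀ p, f p = 1 / (1 + Real.exp (β * Δ p))) :
    (∀ p ∈ Set.Icc (0:ℝ) 1, ∀ q ∈ Set.Icc (0:ℝ) 1,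
        f p = p → f q = q → p = q) ∧
      ∃ p ∈ Set.Icc (0:ℝ) 1, f p = p :=
  qre_sb_unique_general α γ κ β hcontr Δ f hΔ hf
end

section
/- Let a, b, c, d be real numbers with b > a and c + d ≤ a + b, let α = b − c, γ = a − d satisfy α > 0 and γ > 0, let κ ≥ 0, β ∈ ℝ, and t ∈ ℝ, and define W(p) = p²·a + p(1−p)(c+d) + (1−p)²·b and f_t(p) = 1/(1 + exp(β·(α − κ + t − p(α+γ)))). If p_t ∈ [0,1] is any fixed point of f_t, then W(p_t) < W(0) = b. That is, for any finite tax that leaves the status-quo action feasible, expected welfare under the resulting QRE-SB is strictly below the welfare b attained when the status-quo action is deleted. -/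
/-- Welfare superiority of deletion: for any finite tax `t`, any QRE-SB fixed
point `p_t` yields welfare strictly below `W(0) = b`, the welfare under deletion
of the status-quo action. -/
theorem welfare_deletion_beats_tax
    (a b c d α γ κ β t : ℝ)
    (hba : b > a) (hcd : c + d ≤ a + b)
    (hαdef : α = b - c) (hγdef : γ = a - d)
    (hα : 0 < α) (hγ : 0 < γ) (hκ : 0 ≤ κ)
    (W : ℝ → ℝ)
    (hW : ∀ p, W p = p^2 * a + p * (1 - p) * (c + d) + (1 - p)^2 * b)
    (p : ℝ) (hp : p ∈ Set.Icc (0:ℝ) 1)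
    (hfix : 1 / (1 + Real.exp (β * (α - κ + t - p * (α + γ)))) = p) :
    W p < W 0 ∧ W 0 = b := by
  obtain ⟨hp0, hp1⟩ := hp
  have hpos : 0 < p := by
    rw [← hfix]
    positivity
  have hW0 : W 0 = b := by simp [hW]
  refine ⟨?_, hW0⟩
  rw [hW p, hW0]
  nlinarith [mul_nonneg (sub_nonneg.2 hp1) (sub_nonneg.2 hcd),
    mul_pos hpos (sub_pos.2 hba)]
end
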